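/- arXiv:2207.05180 — 4 statements merged into one kernel-verified Lean document; each statement's English description precedes it below -/
import Mathlib

section
/- (Theorem 2, stationarity.) Let G be a finite simple graph on a nonempty finite vertex set V with deg(u) ≥ 1 for all u, let K be a positive real with deg(u) ≤ K for all u, let P(u,v) = 1/K if u,v adjacent, P(u,u) = 1 − deg(u)/K, 0 otherwise, and let Q(u,v) = 1/deg(u) if u,v adjacent, 0 otherwise. For a,b ∈ V set κ(a,b) = min{1, deg(a)/deg(b)}, and define the coupled transition matrix T on V × V by T((u₁,u₂),(v₁,v₂)) = P(u₁,v₁)·Q(u₂,v₂)·(1 − κ(v₁,v₂)) + P(u₁,v₂)·Q(u₂,v₁)·κ(v₂,v₁). Then T is a stochastic matrix on V × V, and the product distribution μ(v₁,v₂) = (1/|V|)·(deg(v₂)/Σ_{w∈V} deg(w)) is stationary for T: Σ_{(u₁,u₂)} μ(u₁,u₂)·T((u₁,u₂),(v₁,v₂)) = μ(v₁,v₂) for all (v₁,v₂). -/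
/-!
The lazy walk `P` is symmetric, hence doubly stochastic, and the random walk `Q` has the degree
vector as a stationary measure. The acceptance rule satisfies the Metropolis balance
`deg a · κ(b, a) = deg b · κ(a, b)`, both sides being `min (deg a) (deg b)`. Summing `μ T` over
the first coordinate therefore leaves, up to normalisation,
`deg v₂ (1 - κ(v₁, v₂)) + deg v₁ κ(v₂, v₁)`, which is `deg v₂` by the balance. Renaming the
summation variables in the swap term turns the row sum of `T` into `(∑ P) (∑ Q) = 1`.
-/

open Finset

section CoupledKernel

variable {V : Type*}

/-- Propose `(v₁, v₂)` via `P ⊗ Q` and accept the swap `(v₂, v₁)` with probability `κ v₁ v₂`. -/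
noncomputable def coupledKernel (P Q κ : V → V → ℝ) (x y : V × V) : ℝ :=
  P x.1 y.1 * Q x.2 y.2 * (1 - κ y.1 y.2) + P x.1 y.2 * Q x.2 y.1 * κ y.2 y.1

variable {P Q κ : V → V → ℝ}

theorem coupledKernel_nonneg (hP : ∀ u v, 0 ≤ P u v) (hQ : ∀ u v, 0 ≤ Q u v)
    (hκ₀ : ∀ a b, 0 ≤ κ a b) (hκ₁ : ∀ a b, κ a b ≤ 1) (x y : V × V) :
    0 ≤ coupledKernel P Q κ x y := by
  have := hκ₁ y.1 y.2
  have := hκ₀ y.2 y.1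
  have := hP x.1 y.1; have := hP x.1 y.2; have := hQ x.2 y.2; have := hQ x.2 y.1
  unfold coupledKernel
  bound

variable [Fintype V]

theorem sum_coupledKernel (P Q κ : V → V → ℝ) (x : V × V) :
    ∑ y, coupledKernel P Q κ x y = (∑ v, P x.1 v) * ∑ v, Q x.2 v := by
  have swap : ∑ y : V × V, P x.1 y.2 * Q x.2 y.1 * κ y.2 y.1
      = ∑ y : V × V, P x.1 y.1 * Q x.2 y.2 * κ y.1 y.2 :=
    Fintype.sum_equiv (Equiv.prodComm V V) _ _ fun _ => rfl
  calc ∑ y, coupledKernel P Q κ x y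
      = ∑ y : V × V, (P x.1 y.1 * Q x.2 y.2 * (1 - κ y.1 y.2)
          + P x.1 y.1 * Q x.2 y.2 * κ y.1 y.2) := by
        rw [sum_add_distrib, ← swap, ← sum_add_distrib]; rfl
    _ = ∑ y : V × V, P x.1 y.1 * Q x.2 y.2 := sum_congr rfl fun _ _ => by ring
    _ = (∑ v, P x.1 v) * ∑ v, Q x.2 v := by rw [Fintype.sum_prod_type, sum_mul_sum]

theorem sum_mul_coupledKernel (π : V → ℝ) (c : ℝ) (hP : ∀ v, ∑ u, P u v = 1)
    (hQ : ∀ v, ∑ u, π u * Q u v = π v) (hκ : ∀ a b, π a * κ b a = π b * κ a b) (y : V × V) :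
    ∑ x : V × V, c * π x.2 * coupledKernel P Q κ x y = c * π y.2 := by
  obtain ⟨v₁, v₂⟩ := y
  calc ∑ x : V × V, c * π x.2 * coupledKernel P Q κ x (v₁, v₂)
      = c * ((∑ u, P u v₁) * (∑ u, π u * Q u v₂) * (1 - κ v₁ v₂)
          + (∑ u, P u v₂) * (∑ u, π u * Q u v₁) * κ v₂ v₁) := by
        rw [Fintype.sum_prod_type, sum_mul_sum, sum_mul_sum]
        simp only [sum_mul, mul_sum, ← sum_add_distrib]
        exact sum_congr rfl fun _ _ => sum_congr rfl fun _ _ => by unfold coupledKernel; ring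
    _ = c * (π v₂ * (1 - κ v₁ v₂) + π v₁ * κ v₂ v₁) := by rw [hP, hP, hQ, hQ, one_mul, one_mul]
    _ = c * π v₂ := by rw [hκ]; ring

end CoupledKernel

theorem mul_min_one_div {a b : ℝ} (ha : 0 ≤ a) (hb : 0 ≤ b) : a * min 1 (b / a) = min a b := by
  rcases ha.eq_or_lt with rfl | ha
  · simp [hb]
  · rw [mul_min_of_nonneg _ _ ha.le, mul_one, mul_div_cancel₀ _ ha.ne']

theorem mul_min_one_div_comm {a b : ℝ} (ha : 0 ≤ a) (hb : 0 ≤ b) :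
    a * min 1 (b / a) = b * min 1 (a / b) := by
  rw [mul_min_one_div ha hb, mul_min_one_div hb ha, min_comm]

namespace SimpleGraph

variable {V : Type*} [Fintype V] (G : SimpleGraph V) [DecidableRel G.Adj]

theorem sum_ite_adj (u : V) (f : V → ℝ) :
    ∑ v, (if G.Adj u v then f v else 0) = ∑ v ∈ G.neighborFinset u, f v := by
  rw [← sum_filter, neighborFinset_eq_filter]

noncomputable def lazyWalk [DecidableEq V] (K : ℝ) (u v : V) : ℝ :=
  if G.Adj u v then 1 / K else if u = v then 1 - G.degree u / K else 0

noncomputable def randomWalk (u v : V) : ℝ :=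
  if G.Adj u v then 1 / G.degree u else 0

section LazyWalk

variable [DecidableEq V] (K : ℝ)

theorem lazyWalk_comm (u v : V) : G.lazyWalk K u v = G.lazyWalk K v u := by
  unfold lazyWalk
  by_cases h : u = v
  · subst h; rfl
  · simp only [G.adj_comm u v, if_neg h, if_neg (Ne.symm h)]

theorem lazyWalk_nonneg {K : ℝ} (hK : ∀ u, (G.degree u : ℝ) ≤ K) (u v : V) :
    0 ≤ G.lazyWalk K u v := by
  have hK₀ : 0 ≤ K := (Nat.cast_nonneg _).trans (hK u)
  unfold lazyWalk
  split_ifs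
  · positivity
  · linarith [div_le_one_of_le₀ (hK u) hK₀]
  · rfl

theorem sum_lazyWalk (u : V) : ∑ v, G.lazyWalk K u v = 1 := by
  have hsplit : ∀ v, G.lazyWalk K u v
      = (if G.Adj u v then 1 / K else 0) + if u = v then 1 - G.degree u / K else 0 := by
    intro v
    by_cases h : G.Adj u v
    · simp [lazyWalk, h, G.ne_of_adj h]
    · simp [lazyWalk, h]
  simp only [hsplit, sum_add_distrib, sum_ite_adj, sum_const, card_neighborFinset_eq_degree,
    sum_ite_eq, mem_univ, if_true, nsmul_eq_mul]
  ring

theorem sum_lazyWalk_left (v : V) : ∑ u, G.lazyWalk K u v = 1 := by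
  simp only [G.lazyWalk_comm K _ v, sum_lazyWalk]

end LazyWalk

theorem randomWalk_nonneg (u v : V) : 0 ≤ G.randomWalk u v := by
  unfold randomWalk
  positivity

theorem sum_randomWalk {u : V} (hu : G.degree u ≠ 0) : ∑ v, G.randomWalk u v = 1 := by
  simp only [randomWalk, sum_ite_adj, sum_const, card_neighborFinset_eq_degree, nsmul_eq_mul]
  field_simp

theorem sum_degree_mul_randomWalk (v : V) :
    ∑ u, (G.degree u : ℝ) * G.randomWalk u v = G.degree v := by
  have term : ∀ u, (G.degree u : ℝ) * G.randomWalk u v = if G.Adj v u then 1 else 0 := by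
    intro u
    by_cases h : G.Adj u v
    · have : (G.degree u : ℝ) ≠ 0 :=
        Nat.cast_ne_zero.2 ((G.degree_pos_iff_exists_adj u).2 ⟨v, h⟩).ne'
      simp [randomWalk, h, h.symm, this]
    · simp [randomWalk, h, G.adj_comm v u]
  simp only [term, sum_ite_adj, sum_const, card_neighborFinset_eq_degree, nsmul_eq_mul, mul_one]

end SimpleGraph

theorem coupled_chain_stochastic_stationary_general
    {V : Type*} [Fintype V] [DecidableEq V]
    (G : SimpleGraph V) [DecidableRel G.Adj]
    (hdeg : ∀ u : V, 1 ≤ G.degree u)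
    (K : ℝ) (hdegK : ∀ u : V, (G.degree u : ℝ) ≤ K)
    (P : V → V → ℝ)
    (hP : ∀ u v : V, P u v =
      if G.Adj u v then 1 / K
      else if u = v then 1 - (G.degree u : ℝ) / K
      else 0)
    (Q : V → V → ℝ)
    (hQ : ∀ u v : V, Q u v = if G.Adj u v then 1 / (G.degree u : ℝ) else 0)
    (κ : V → V → ℝ)
    (hκ : ∀ a b : V, κ a b = min 1 ((G.degree a : ℝ) / (G.degree b : ℝ)))
    (T : V × V → V × V → ℝ)
    (hT : ∀ u₁ u₂ v₁ v₂ : V, T (u₁, u₂) (v₁, v₂) =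
      P u₁ v₁ * Q u₂ v₂ * (1 - κ v₁ v₂) + P u₁ v₂ * Q u₂ v₁ * κ v₂ v₁)
    (μ : V × V → ℝ)
    (hμ : ∀ v₁ v₂ : V, μ (v₁, v₂) =
      (1 / (Fintype.card V : ℝ)) *
        ((G.degree v₂ : ℝ) / ∑ w : V, (G.degree w : ℝ))) :
    (∀ x y : V × V, 0 ≤ T x y) ∧ (∀ x : V × V, ∑ y : V × V, T x y = 1) ∧
    (∀ y : V × V, ∑ x : V × V, μ x * T x y = μ y) := by
  obtain rfl : P = G.lazyWalk K := funext₂ hP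
  obtain rfl : Q = G.randomWalk := funext₂ hQ
  obtain rfl : T = coupledKernel (G.lazyWalk K) G.randomWalk κ :=
    funext₂ fun x y => hT x.1 x.2 y.1 y.2
  set c : ℝ := 1 / Fintype.card V / ∑ w, (G.degree w : ℝ)
  obtain rfl : μ = fun x => c * G.degree x.2 :=
    funext fun x => (hμ x.1 x.2).trans (by ring)
  have hdeg₀ : ∀ u, G.degree u ≠ 0 := fun u => Nat.one_le_iff_ne_zero.mp (hdeg u)
  refine ⟨coupledKernel_nonneg (G.lazyWalk_nonneg hdegK) G.randomWalk_nonneg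
      (fun a b => by rw [hκ]; positivity) (fun a b => hκ a b ▸ min_le_left _ _),
    fun x => by rw [sum_coupledKernel, G.sum_lazyWalk, G.sum_randomWalk (hdeg₀ _), one_mul],
    sum_mul_coupledKernel _ c (G.sum_lazyWalk_left K) G.sum_degree_mul_randomWalk
      fun a b => by simp only [hκ]; exact mul_min_one_div_comm (by positivity) (by positivity)⟩

/-- Theorem 2, stationarity: the Metropolis-coupled transition matrix `T` on
`V × V` is stochastic and the product of the uniform distribution and the
degree distribution is stationary for it. -/
theorem coupled_chain_stochastic_stationary
    {V : Type*} [Fintype V] [DecidableEq V] [Nonempty V]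
    (G : SimpleGraph V) [DecidableRel G.Adj]
    (hdeg : ∀ u : V, 1 ≤ G.degree u)
    (K : ℝ) (hK : 0 < K) (hdegK : ∀ u : V, (G.degree u : ℝ) ≤ K)
    (P : V → V → ℝ)
    (hP : ∀ u v : V, P u v =
      if G.Adj u v then 1 / K
      else if u = v then 1 - (G.degree u : ℝ) / K
      else 0)
    (Q : V → V → ℝ)
    (hQ : ∀ u v : V, Q u v = if G.Adj u v then 1 / (G.degree u : ℝ) else 0)
    (κ : V → V → ℝ)
    (hκ : ∀ a b : V, κ a b = min 1 ((G.degree a : ℝ) / (G.degree b : ℝ)))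
    (T : V × V → V × V → ℝ)
    (hT : ∀ u₁ u₂ v₁ v₂ : V, T (u₁, u₂) (v₁, v₂) =
      P u₁ v₁ * Q u₂ v₂ * (1 - κ v₁ v₂) + P u₁ v₂ * Q u₂ v₁ * κ v₂ v₁)
    (μ : V × V → ℝ)
    (hμ : ∀ v₁ v₂ : V, μ (v₁, v₂) =
      (1 / (Fintype.card V : ℝ)) *
        ((G.degree v₂ : ℝ) / ∑ w : V, (G.degree w : ℝ))) :
    (∀ x y : V × V, 0 ≤ T x y) ∧ (∀ x : V × V, ∑ y : V × V, T x y = 1) ∧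
    (∀ y : V × V, ∑ x : V × V, μ x * T x y = μ y) :=
  coupled_chain_stochastic_stationary_general G hdeg K hdegK P hP Q hQ κ hκ T hT μ hμ
end

section
/- Let (X, ≤) be a finite partially ordered set with n elements and let x ∈ X. Call a bijection σ : X → {1, …, n} a linear extension if a < b implies σ(a) < σ(b) for all a, b ∈ X. Then the set of positions of x over all linear extensions, {σ(x) : σ a linear extension}, is exactly the integer interval {r : #{y ∈ X : y < x} + 1 ≤ r ≤ n − #{y ∈ X : x < y}}. -/
/-!
A linear extension `σ` maps `{y | y < x}` injectively below `σ x` and `{y | x < y}` above it,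
which gives the bounds. Conversely, for `r` in the range, grow the lower set `{y | y < x}` one
minimal element at a time, inside the lower set `{y | ¬x ≤ y}`, to a lower set `S` with
`r - 1` elements; listing `S` first, then `x`, then the rest, each part along some linear
extension, puts `x` in position `r`.
-/

open Finset Function

section LowerSet

variable {X : Type*} [PartialOrder X]

theorem IsLowerSet.insert_of_forall_lt {s : Set X} (hs : IsLowerSet s) {a : X}
    (ha : ∀ b < a, b ∈ s) : IsLowerSet (insert a s) := by
  rintro b c hcb (rfl | hb)
  · exact hcb.eq_or_lt.elim (fun h => .inl h) fun h => .inr (ha c h)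
  · exact .inr (hs hcb hb)

theorem exists_isLowerSet_card_eq [DecidableEq X] {A B : Finset X}
    (hA : IsLowerSet (A : Set X)) (hB : IsLowerSet (B : Set X)) (hAB : A ⊆ B) {k : ℕ}
    (hAk : #A ≤ k) (hkB : k ≤ #B) :
    ∃ S : Finset X, IsLowerSet (S : Set X) ∧ A ⊆ S ∧ S ⊆ B ∧ #S = k := by
  induction k, hAk using Nat.le_induction with
  | base => exact ⟨A, hA, subset_rfl, hAB, rfl⟩
  | succ k _ ih =>
    obtain ⟨S, hS, hAS, hSB, rfl⟩ := ih (by omega)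
    have hne : (B \ S).Nonempty :=
      sdiff_nonempty.2 fun hBS => by have := card_le_card hBS; omega
    obtain ⟨m, hm⟩ := Finset.exists_minimal hne
    obtain ⟨hmB, hmS⟩ := mem_sdiff.1 hm.prop
    have hbelow : ∀ b < m, b ∈ (S : Set X) := fun b hbm => by
      by_contra hbS
      exact hbm.not_ge (hm.le_of_le (mem_sdiff.2 ⟨hB hbm.le hmB, hbS⟩) hbm.le)
    refine ⟨insert m S, ?_, hAS.trans (subset_insert _ _), insert_subset hmB hSB,
      card_insert_of_notMem hmS⟩
    rw [coe_insert]
    exact hS.insert_of_forall_lt hbelow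

end LowerSet

section Rank

variable {α β : Type*} [Fintype α] [LinearOrder β] {g : α → β}

theorem card_filter_lt_apply_lt_of_lt {a b : α} (h : g a < g b) :
    #{y | g y < g a} < #{y | g y < g b} := by
  refine card_lt_card ((ssubset_iff_of_subset fun y hy => ?_).2 ⟨a, ?_, ?_⟩)
  · simp only [mem_filter, mem_univ, true_and] at hy ⊢
    exact hy.trans h
  · simpa using h
  · simp

theorem exists_equiv_fin_val_eq_card_filter_lt (hg : Injective g) {n : ℕ}
    (hn : Fintype.card α = n) : ∃ σ : α ≃ Fin n, ∀ a, (σ a : ℕ) = #{y | g y < g a} := by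
  let f : α → Fin n := fun a =>
    ⟨#{y | g y < g a}, hn ▸ card_lt_univ_of_notMem (x := a) (by simp)⟩
  have hf : Injective f := fun a b hab => by
    have hab : #{y | g y < g a} = #{y | g y < g b} := congrArg Fin.val hab
    rcases lt_trichotomy (g a) (g b) with h | h | h
    · exact absurd hab (card_filter_lt_apply_lt_of_lt h).ne
    · exact hg h
    · exact absurd hab (card_filter_lt_apply_lt_of_lt h).ne'
  have hbij : Bijective f := (Fintype.bijective_iff_injective_and_card f).2 ⟨hf, by simp [hn]⟩
  exact ⟨Equiv.ofBijective f hbij, fun _ => rfl⟩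

end Rank

section LinearExtension

variable {X : Type*} [PartialOrder X] {n : ℕ}

theorem card_lt_le_of_strictMono (σ : X ≃ Fin n) (hσ : StrictMono σ) (x : X) :
    Nat.card {y // y < x} ≤ σ x := by
  simpa using Nat.card_le_card_of_injective (β := Set.Iio (σ x))
    (fun y : {y // y < x} => ⟨σ y, hσ y.2⟩) fun _ _ h =>
      Subtype.ext (σ.injective (congrArg Subtype.val h))

theorem card_gt_le_of_strictMono (σ : X ≃ Fin n) (hσ : StrictMono σ) (x : X) :
    Nat.card {y // x < y} ≤ n - 1 - σ x := by
  simpa using Nat.card_le_card_of_injective (β := Set.Ioi (σ x))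
    (fun y : {y // x < y} => ⟨σ y, hσ y.2⟩) fun _ _ h =>
      Subtype.ext (σ.injective (congrArg Subtype.val h))

theorem card_gt_add_one_add_card_filter_not_le [Fintype X] [DecidableEq X] [DecidableLE X]
    [DecidableLT X] (x : X) : Nat.card {y // x < y} + 1 + #{y | ¬x ≤ y} = Fintype.card X := by
  have hIci : filter (x ≤ ·) univ = insert x (filter (x < ·) univ) := by
    ext y
    simp [le_iff_eq_or_lt, eq_comm]
  rw [← card_univ, ← card_filter_add_card_filter_not (s := univ) (x ≤ ·), hIci,
    card_insert_of_notMem (by simp), Nat.card_eq_fintype_card, Fintype.card_subtype]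

theorem exists_strictMono_equiv_fin_apply_eq_card [Fintype X] [DecidableEq X]
    (hn : Fintype.card X = n) {S : Finset X} (hS : IsLowerSet (S : Set X)) {x : X}
    (hxS : x ∉ S) (hbelow : ∀ y < x, y ∈ S) :
    ∃ σ : X ≃ Fin n, StrictMono σ ∧ (σ x : ℕ) = #S := by
  let block : X → ℕ := fun a => if a ∈ S then 0 else if a = x then 1 else 2
  have hblock : Monotone block := fun a b hab => by
    by_cases hb : b ∈ S
    · simp [block, hb, show a ∈ S from hS hab hb]
    by_cases hbx : b = x
    · subst hbx
      rcases hab.eq_or_lt with rfl | hlt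
      · rfl
      · simp [block, hbelow a hlt]
    · simp only [block, hb, hbx, if_false]
      split_ifs <;> omega
  let key : X → ℕ ×ₗ LinearExtension X := fun a => toLex (block a, toLinearExtension a)
  have hkey : StrictMono key := fun a b hab =>
    Prod.Lex.toLex_strictMono (Prod.mk_lt_mk_of_le_of_lt (hblock hab.le)
      (lt_of_le_of_ne (toLinearExtension.monotone hab.le) hab.ne))
  have hkey_inj : Injective key := fun a b h => congrArg (fun p => (ofLex p).2) h
  have hkey_x : ∀ y, key y < key x ↔ y ∈ S := fun y => by
    by_cases hy : y ∈ S
    · simp [key, block, Prod.Lex.toLex_lt_toLex, hy, hxS]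
    · by_cases hyx : y = x
      · simp [hyx, hxS]
      · simp [key, block, Prod.Lex.toLex_lt_toLex, hy, hyx, hxS]
  obtain ⟨σ, hσ⟩ := exists_equiv_fin_val_eq_card_filter_lt hkey_inj hn
  refine ⟨σ, fun a b hab => ?_, ?_⟩
  · rw [Fin.lt_def, hσ, hσ]
    exact card_filter_lt_apply_lt_of_lt (hkey hab)
  · rw [hσ]
    congr 1
    ext y
    simp [hkey_x]

end LinearExtension

/-- In a finite poset with `n` elements, the set of positions of a fixed
element `x` over all linear extensions is exactly the integer interval from
`#{y : y < x} + 1` to `n - #{y : x < y}`. -/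
theorem linear_extension_positions
    {X : Type*} [Fintype X] [PartialOrder X]
    (n : ℕ) (hn : Fintype.card X = n) (x : X) :
    ∀ r : ℕ,
      (∃ σ : X ≃ Fin n, (∀ a b : X, a < b → σ a < σ b) ∧ r = (σ x : ℕ) + 1) ↔
      (Nat.card {y : X // y < x} + 1 ≤ r ∧
       r ≤ n - Nat.card {y : X // x < y}) := by
  classical
  intro r
  constructor
  · rintro ⟨σ, hσ, rfl⟩
    have hlo := card_lt_le_of_strictMono σ (fun a b h => hσ a b h) x
    have hhi := card_gt_le_of_strictMono σ (fun a b h => hσ a b h) x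
    have := (σ x).isLt
    omega
  · rintro ⟨hlo, hhi⟩
    rw [Nat.card_eq_fintype_card, Fintype.card_subtype] at hlo
    have hup := card_gt_add_one_add_card_filter_not_le x
    obtain ⟨S, hS, hAS, hSB, hS_card⟩ :=
      exists_isLowerSet_card_eq (A := {y | y < x}) (B := {y | ¬x ≤ y}) (k := r - 1)
        (by rw [coe_filter_univ]; exact isLowerSet_Iio x)
        (by rw [coe_filter_univ]; exact (isUpperSet_Ici x).compl)
        (fun y => by simpa using not_le_of_gt) (by omega) (by omega)
    obtain ⟨σ, hσ, hσx⟩ := exists_strictMono_equiv_fin_apply_eq_card hn hS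
      (fun hx : x ∈ S => by simpa using hSB hx) fun y hy => hAS (by simpa using hy)
    exact ⟨σ, fun a b h => hσ h, by omega⟩
end

section
/- (Proposition 1, uncensored case.) Fix n ≥ 1, observed values x : {1,…,n} → ℝ, and a set C ⊆ {1,…,n} of right-censored indices with complement U (uncensored indices). Call a bijection σ : {1,…,n} → {1,…,n} an admissible rank vector if: (i) for all i, j ∈ U, x_i < x_j implies σ(i) < σ(j); and (ii) for all i ∈ U and j ∈ C, x_i ≤ x_j implies σ(i) < σ(j). Then for every uncensored index i ∈ U, the set of possible ranks {σ(i) : σ admissible} equals the integer interval {r : #{j ∈ U : x_j < x_i} + 1 ≤ r ≤ #{j ∈ U : x_j ≤ x_i} + #{j ∈ C : x_j < x_i}}. -/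
/-!
An admissible `σ` puts every uncensored observation below `x i` before `i`, and only uncensored
observations at most `x i` and censored observations below `x i` can be ranked at or before `i`;
this gives the two bounds. Conversely, the data leave open only the order of `i` relative to its
uncensored ties and to the censored observations below `x i`. Choosing any `m` of these to precede
`i` and sorting by a suitable key gives an admissible `σ` ranking `i` at
`#{j ∉ C : x j < x i} + m`, and `m` ranges over all values up to the number of such observations.
-/

open Finset Function Equiv

namespace Equiv.Perm

variable {n : ℕ}

theorem card_filter_apply_lt (σ : Perm (Fin n)) (j : Fin n) : #{k | σ k < σ j} = σ j := by
  rw [← Fin.card_Iio]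
  exact card_equiv σ (by simp)

theorem card_filter_apply_le (σ : Perm (Fin n)) (j : Fin n) : #{k | σ k ≤ σ j} = σ j + 1 := by
  rw [← Fin.card_Iic]
  exact card_equiv σ (by simp)

end Equiv.Perm

theorem exists_perm_lt_iff_of_injective {n : ℕ} {α : Type*} [LinearOrder α] {κ : Fin n → α}
    (hκ : Injective κ) : ∃ σ : Perm (Fin n), ∀ j k, σ j < σ k ↔ κ j < κ k := by
  have hcard : #(univ.image κ) = n := by rw [card_image_of_injective _ hκ, card_fin]
  let f : Fin n → Fin n := fun j =>
    ((univ.image κ).orderIsoOfFin hcard).symm ⟨κ j, mem_image_of_mem κ (mem_univ j)⟩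
  have hinj : Injective f := fun j k h => hκ (by simpa [f] using h)
  exact ⟨Equiv.ofBijective f (Finite.injective_iff_bijective.1 hinj), fun j k => by simp [f]⟩

section Censoring

variable {n : ℕ} {α : Type*} [LinearOrder α] (x : Fin n → α) (C : Finset (Fin n))

def IsAdmissibleRank (σ : Perm (Fin n)) : Prop :=
  (∀ a b : Fin n, a ∉ C → b ∉ C → x a < x b → σ a < σ b) ∧
    (∀ a b : Fin n, a ∉ C → b ∈ C → x a ≤ x b → σ a < σ b)

def uncensoredBelow (i : Fin n) : Finset (Fin n) := {j | j ∉ C ∧ x j < x i}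

def uncensoredAtMost (i : Fin n) : Finset (Fin n) := {j | j ∉ C ∧ x j ≤ x i}

def censoredBelow (i : Fin n) : Finset (Fin n) := {j | j ∈ C ∧ x j < x i}

def orderAmbiguous (i : Fin n) : Finset (Fin n) :=
  {j | j ≠ i ∧ (j ∉ C ∧ x j = x i ∨ j ∈ C ∧ x j < x i)}

/-- Sorting by this key ranks `i` directly after `uncensoredBelow x C i ∪ S` when
`S ⊆ orderAmbiguous x C i`: censored values are raised to at least `x i`, and ties are broken
in the order `S`, `i`, other uncensored, censored. -/
def rankKey (S : Finset (Fin n)) (i j : Fin n) : α ×ₗ ℕ ×ₗ Fin n :=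
  toLex (if j ∈ C then max (x j) (x i) else x j,
    toLex (if j ∈ S then 0 else if j = i then 1 else if j ∈ C then 3 else 2, j))

variable {x C} {σ : Perm (Fin n)} {i : Fin n}

theorem IsAdmissibleRank.card_uncensoredBelow_le (hσ : IsAdmissibleRank x C σ) (hi : i ∉ C) :
    #(uncensoredBelow x C i) ≤ σ i := by
  rw [← σ.card_filter_apply_lt i]
  refine card_le_card fun j hj => ?_
  simp only [uncensoredBelow, mem_filter, mem_univ, true_and] at hj ⊢
  exact hσ.1 j i hj.1 hi hj.2

theorem IsAdmissibleRank.lt_card_uncensoredAtMost_add (hσ : IsAdmissibleRank x C σ)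
    (hi : i ∉ C) : σ i < #(uncensoredAtMost x C i) + #(censoredBelow x C i) := by
  have hsub :
      ({j | σ j ≤ σ i} : Finset (Fin n)) ⊆ uncensoredAtMost x C i ∪ censoredBelow x C i := by
    intro j hj
    simp only [uncensoredAtMost, censoredBelow, mem_filter, mem_univ, true_and, mem_union] at hj ⊢
    by_cases hj' : j ∈ C
    · exact .inr ⟨hj', lt_of_not_ge fun h => (hσ.2 i j hi hj' h).not_ge hj⟩
    · exact .inl ⟨hj', le_of_not_gt fun h => (hσ.1 i j hi hj' h).not_ge hj⟩
  have := (card_le_card hsub).trans (card_union_le _ _)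
  rw [σ.card_filter_apply_le i] at this
  omega

variable (x) in
theorem card_orderAmbiguous (hi : i ∉ C) :
    #(orderAmbiguous x C i) + #(uncensoredBelow x C i) + 1 =
      #(uncensoredAtMost x C i) + #(censoredBelow x C i) := by
  have hsplit : uncensoredAtMost x C i ∪ censoredBelow x C i =
      insert i (orderAmbiguous x C i ∪ uncensoredBelow x C i) := by
    ext j
    simp only [uncensoredAtMost, censoredBelow, orderAmbiguous, uncensoredBelow, mem_union,
      mem_insert, mem_filter, mem_univ, true_and]
    grind
  have hAB : Disjoint (uncensoredAtMost x C i) (censoredBelow x C i) :=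
    disjoint_filter.2 fun _ _ h h' => h.1 h'.1
  have hDL : Disjoint (orderAmbiguous x C i) (uncensoredBelow x C i) :=
    disjoint_filter.2 fun _ _ h h' => by grind
  rw [← card_union_of_disjoint hAB, hsplit,
    card_insert_of_notMem (by simp [orderAmbiguous, uncensoredBelow]), card_union_of_disjoint hDL]

theorem rankKey_injective (S : Finset (Fin n)) : Injective (rankKey x C S i) := fun j k h => by
  simpa [rankKey] using congrArg (fun p => (ofLex (ofLex p).2).2) h

variable {S : Finset (Fin n)}

theorem isAdmissibleRank_of_lt_iff_rankKey (hi : i ∉ C) (hS : S ⊆ orderAmbiguous x C i)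
    (hσ : ∀ j k, σ j < σ k ↔ rankKey x C S i j < rankKey x C S i k) :
    IsAdmissibleRank x C σ := by
  refine ⟨fun a b ha hb hab => ?_, fun a b ha hb hab => ?_⟩
  · simp [hσ, rankKey, Prod.Lex.toLex_lt_toLex, ha, hb, hab]
  · have hbi : b ≠ i := by rintro rfl; exact hi hb
    by_cases hbS : b ∈ S
    · have hbx : x b < x i := by simpa [orderAmbiguous, hb, hbi] using hS hbS
      simp [hσ, rankKey, Prod.Lex.toLex_lt_toLex, hb, ha, hab.trans_lt hbx]
    · simp only [hσ, rankKey, ha, hb, hbS, hbi, ↓reduceIte, Prod.Lex.toLex_lt_toLex, lt_sup_iff]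
      grind

theorem card_filter_rankKey_lt_rankKey_self (hi : i ∉ C) (hS : S ⊆ orderAmbiguous x C i) :
    #{k | rankKey x C S i k < rankKey x C S i i} = #(uncensoredBelow x C i) + #S := by
  have hmem : ∀ k ∈ S, k ≠ i ∧ (k ∉ C ∧ x k = x i ∨ k ∈ C ∧ x k < x i) := fun _ hk => by
    simpa [orderAmbiguous] using hS hk
  have hdisj : Disjoint (uncensoredBelow x C i) S := disjoint_left.2 fun k hk hkS => by
    simp only [uncensoredBelow, mem_filter, mem_univ, true_and] at hk
    grind
  rw [← card_union_of_disjoint hdisj]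
  congr 1
  ext k
  simp only [uncensoredBelow, rankKey, hi, ↓reduceIte, Prod.Lex.toLex_lt_toLex, mem_filter,
    mem_univ, true_and, mem_union]
  grind

theorem exists_isAdmissibleRank_apply_eq (hi : i ∉ C) {r : ℕ}
    (hr₁ : #(uncensoredBelow x C i) ≤ r)
    (hr₂ : r < #(uncensoredAtMost x C i) + #(censoredBelow x C i)) :
    ∃ σ : Perm (Fin n), IsAdmissibleRank x C σ ∧ (σ i : ℕ) = r := by
  have hroom : r - #(uncensoredBelow x C i) ≤ #(orderAmbiguous x C i) := by
    have := card_orderAmbiguous x hi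
    omega
  obtain ⟨S, hS, hScard⟩ := exists_subset_card_eq hroom
  obtain ⟨σ, hσ⟩ :=
    exists_perm_lt_iff_of_injective (rankKey_injective (x := x) (C := C) (i := i) S)
  refine ⟨σ, isAdmissibleRank_of_lt_iff_rankKey hi hS hσ, ?_⟩
  rw [← σ.card_filter_apply_lt i]
  simp_rw [hσ]
  rw [card_filter_rankKey_lt_rankKey_self hi hS]
  omega

end Censoring

theorem right_censored_ranks_uncensored_general
    (n : ℕ) (x : Fin n → ℝ) (C : Finset (Fin n))
    (i : Fin n) (hi : i ∉ C) :
    ∀ r : ℕ,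
      (∃ σ : Equiv.Perm (Fin n),
        ((∀ a b : Fin n, a ∉ C → b ∉ C → x a < x b → σ a < σ b) ∧
         (∀ a b : Fin n, a ∉ C → b ∈ C → x a ≤ x b → σ a < σ b)) ∧
        r = (σ i : ℕ) + 1) ↔
      (Nat.card {j : Fin n // j ∉ C ∧ x j < x i} + 1 ≤ r ∧
       r ≤ Nat.card {j : Fin n // j ∉ C ∧ x j ≤ x i} +
             Nat.card {j : Fin n // j ∈ C ∧ x j < x i}) := by
  intro r
  simp only [Nat.card_eq_fintype_card, Fintype.card_subtype]
  change (∃ σ, IsAdmissibleRank x C σ ∧ r = (σ i : ℕ) + 1) ↔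
    #(uncensoredBelow x C i) + 1 ≤ r ∧ r ≤ #(uncensoredAtMost x C i) + #(censoredBelow x C i)
  constructor
  · rintro ⟨σ, hσ, rfl⟩
    have := hσ.card_uncensoredBelow_le hi
    have := hσ.lt_card_uncensoredAtMost_add hi
    omega
  · rintro ⟨hr₁, hr₂⟩
    obtain ⟨σ, hσ, hσi⟩ :=
      exists_isAdmissibleRank_apply_eq (x := x) hi (r := r - 1) (by omega) (by omega)
    exact ⟨σ, hσ, by omega⟩

/-- Proposition 1, uncensored case: for right-censored univariate data with
censored index set `C`, the set of possible ranks of an uncensored observation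
`i` over all admissible rank vectors is the integer interval from
`#{j ∉ C : x j < x i} + 1` to `#{j ∉ C : x j ≤ x i} + #{j ∈ C : x j < x i}`. -/
theorem right_censored_ranks_uncensored
    (n : ℕ) (hn : 1 ≤ n) (x : Fin n → ℝ) (C : Finset (Fin n))
    (i : Fin n) (hi : i ∉ C) :
    ∀ r : ℕ,
      (∃ σ : Equiv.Perm (Fin n),
        ((∀ a b : Fin n, a ∉ C → b ∉ C → x a < x b → σ a < σ b) ∧
         (∀ a b : Fin n, a ∉ C → b ∈ C → x a ≤ x b → σ a < σ b)) ∧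
        r = (σ i : ℕ) + 1) ↔
      (Nat.card {j : Fin n // j ∉ C ∧ x j < x i} + 1 ≤ r ∧
       r ≤ Nat.card {j : Fin n // j ∉ C ∧ x j ≤ x i} +
             Nat.card {j : Fin n // j ∈ C ∧ x j < x i}) :=
  right_censored_ranks_uncensored_general n x C i hi
end

section
/- (Proposition 2, unified interval-censored form.) Fix n ≥ 1 and half-open censoring intervals (L_i, R_i] for i = 1,…,n, where L_i ∈ ℝ and R_i ∈ ℝ ∪ {+∞} with L_i < R_i. Call a bijection σ : {1,…,n} → {1,…,n} an achievable rank vector if there exists an injective map w : {1,…,n} → ℝ with L_i < w_i for all i, w_i ≤ R_i whenever R_i is finite, and σ(i) = #{j : w_j < w_i} + 1 for all i. Then for every index i, the set of achievable ranks {σ(i) : σ achievable} equals the integer interval {r : #{j : R_j ≤ L_i} + 1 ≤ r ≤ #{j : L_j < R_i}}, where the condition R_j ≤ L_i is taken to be false when R_j = +∞ and L_j < R_i is taken to be true when R_i = +∞. -/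
/-!
If `w j < w i` then `L j < w j < w i ≤ R i`, and if `R j ≤ L i` then `w j ≤ L i < w i`;
this gives the two bounds. Conversely, a set `D` can be exactly the set of observations
below `i` as soon as every left endpoint in `insert i D` is below every right endpoint
outside `D`: then two reals `t₁ < t₂` separate them, and the values can be chosen below
`t₁`, in `(t₁, t₂)` and above `t₂` respectively. Such a `D` of any prescribed size is
obtained from the forced observations `R j ≤ L i` by adding those compatible with `i` that
have the smallest left endpoints.
-/

open Finset Function

lemma exists_injective_forall_mem {ι α : Type*} [Finite ι] {T : ι → Set α}
    (hT : ∀ j, (T j).Infinite) : ∃ f : ι → α, Injective f ∧ ∀ j, f j ∈ T j := by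
  classical
  have := Fintype.ofFinite ι
  rcases isEmpty_or_nonempty ι with hι | ⟨⟨j₀⟩⟩
  · exact ⟨isEmptyElim, fun a => isEmptyElim a, isEmptyElim⟩
  obtain ⟨x₀, -⟩ := (hT j₀).nonempty
  suffices ∀ s : Finset ι, ∃ f : ι → α, Set.InjOn f s ∧ ∀ j ∈ s, f j ∈ T j by
    obtain ⟨f, hf, hfT⟩ := this univ
    exact ⟨f, Set.injOn_univ.1 (by simpa using hf), fun j => hfT j (mem_univ j)⟩
  intro s
  induction s using Finset.induction with
  | empty => exact ⟨fun _ => x₀, by simp, by simp⟩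
  | insert j s hj ih =>
    obtain ⟨f, hf, hfT⟩ := ih
    obtain ⟨x, hxT, hx⟩ := (hT j).exists_notMem_finite (s.finite_toSet.image f)
    have hfx : Set.EqOn (update f j x) f s := fun k hk =>
      update_of_ne (ne_of_mem_of_not_mem hk hj) x f
    refine ⟨update f j x, ?_, ?_⟩
    · rw [coe_insert, Set.injOn_insert (mod_cast hj), hfx.image_eq, update_self]
      exact ⟨hf.congr hfx.symm, hx⟩
    · intro k hk
      rcases mem_insert.1 hk with rfl | hk
      · simpa using hxT
      · exact hfx hk ▸ hfT k hk

lemma EReal.infinite_setOf_lt_coe_lt {a b : EReal} (hab : a < b) :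
    {x : ℝ | a < x ∧ (x : EReal) < b}.Infinite := by
  obtain ⟨u, hau, hub⟩ := EReal.lt_iff_exists_real_btwn.1 hab
  obtain ⟨v, huv, hvb⟩ := EReal.lt_iff_exists_real_btwn.1 hub
  refine (Set.Ioo_infinite (mod_cast huv : u < v)).mono fun x hx => ⟨?_, ?_⟩
  · exact hau.trans (mod_cast hx.1)
  · exact (EReal.coe_lt_coe_iff.2 hx.2).trans hvb

lemma Finset.exists_subset_card_eq_forall_le {ι α : Type*} [DecidableEq ι] [LinearOrder α]
    (B : Finset ι) (g : ι → α) {m : ℕ} (hm : m ≤ #B) :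
    ∃ S ⊆ B, #S = m ∧ ∀ j ∈ S, ∀ k ∈ B \ S, g j ≤ g k := by
  induction m with
  | zero => exact ⟨∅, empty_subset _, rfl, by simp⟩
  | succ m ih =>
    obtain ⟨S, hSB, hS, hmin⟩ := ih (by omega)
    have hne : (B \ S).Nonempty := by
      rw [← card_pos, card_sdiff_of_subset hSB]
      omega
    obtain ⟨j₀, hj₀, hj₀min⟩ := exists_min_image (B \ S) g hne
    rw [mem_sdiff] at hj₀
    refine ⟨insert j₀ S, insert_subset hj₀.1 hSB, by rw [card_insert_of_notMem hj₀.2, hS], ?_⟩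
    intro j hj k hk
    have hk' : k ∈ B \ S := by grind
    rcases mem_insert.1 hj with rfl | hj
    · exact hj₀min k hk'
    · exact hmin j hj k hk'

lemma Fin.exists_perm_val_eq_card_filter_lt {n : ℕ} {α : Type*} [LinearOrder α] {w : Fin n → α}
    (hw : Injective w) : ∃ σ : Equiv.Perm (Fin n), ∀ k, (σ k : ℕ) = #{j | w j < w k} := by
  have hlt : ∀ k, #{j | w j < w k} < n := fun k => by
    simpa using card_lt_card (filter_ssubset.2 ⟨k, mem_univ k, lt_irrefl (w k)⟩)
  let ρ : Fin n → Fin n := fun k => ⟨_, hlt k⟩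
  have hρ : ∀ {a b}, w a < w b → ρ a < ρ b := fun {a b} hab => by
    refine Fin.mk_lt_mk.2 (card_lt_card ?_)
    rw [ssubset_iff_of_subset fun j => by simpa using fun hj => hj.trans hab]
    exact ⟨a, by simpa using hab, by simp⟩
  have hρinj : Injective ρ := fun a b hab => by
    by_contra hne
    rcases (hw.ne hne).lt_or_gt with h | h
    · exact (hρ h).ne hab
    · exact (hρ h).ne hab.symm
  exact ⟨Equiv.ofBijective ρ (Finite.injective_iff_bijective.1 hρinj), fun k => rfl⟩

lemma exists_real_lt_lt_of_forall_lt {ι : Type*} {P Q : Finset ι} (hP : P.Nonempty)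
    {L : ι → ℝ} {R : ι → EReal} (h : ∀ j ∈ P, ∀ k ∈ Q, (L j : EReal) < R k) :
    ∃ t₁ t₂ : ℝ, t₁ < t₂ ∧ (∀ j ∈ P, L j < t₁) ∧ ∀ k ∈ Q, (t₂ : EReal) < R k := by
  obtain ⟨j₀, hj₀, hsup⟩ := P.exists_mem_eq_sup' hP L
  have hlt : ((P.sup' hP L : ℝ) : EReal) < Q.inf R :=
    (Finset.lt_inf_iff (EReal.coe_lt_top _)).2 fun k hk => hsup ▸ h j₀ hj₀ k hk
  obtain ⟨t₂, hsup₂, ht₂⟩ := EReal.lt_iff_exists_real_btwn.1 hlt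
  obtain ⟨t₁, hsup₁, ht₁₂⟩ := exists_between (EReal.coe_lt_coe_iff.1 hsup₂)
  exact ⟨t₁, t₂, ht₁₂, fun j hj => (le_sup' L hj).trans_lt hsup₁,
    fun k hk => ht₂.trans_le (inf_le hk)⟩

section Ranks

variable {ι : Type*} [Fintype ι] {L : ι → ℝ} {R : ι → EReal} {w : ι → ℝ}

lemma card_filter_le_le_card_filter_lt (hwL : ∀ j, L j < w j) (hwR : ∀ j, (w j : EReal) ≤ R j)
    (i : ι) : #{j | R j ≤ L i} ≤ #{j | w j < w i} := by
  refine card_le_card fun j => ?_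
  simp only [mem_filter_univ]
  intro hj
  exact (EReal.coe_le_coe_iff.1 ((hwR j).trans hj)).trans_lt (hwL i)

lemma card_filter_lt_lt_card_filter_lt (hwL : ∀ j, L j < w j) (hwR : ∀ j, (w j : EReal) ≤ R j)
    (i : ι) : #{j | w j < w i} < #{j | (L j : EReal) < R i} := by
  refine card_lt_card ((ssubset_iff_of_subset fun j => ?_).2 ⟨i, ?_, by simp⟩)
  · simp only [mem_filter_univ]
    intro hj
    calc (L j : EReal) < w j := EReal.coe_lt_coe_iff.2 (hwL j)
      _ < w i := EReal.coe_lt_coe_iff.2 hj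
      _ ≤ R i := hwR i
  · simpa using (EReal.coe_lt_coe_iff.2 (hwL i)).trans_le (hwR i)

lemma exists_injective_filter_lt_eq [DecidableEq ι] (hLR : ∀ j, (L j : EReal) < R j) {i : ι}
    {D : Finset ι} (hiD : i ∉ D) (hcut : ∀ j ∈ insert i D, ∀ k ∉ D, (L j : EReal) < R k) :
    ∃ w : ι → ℝ, Injective w ∧ (∀ j, L j < w j) ∧ (∀ j, (w j : EReal) ≤ R j) ∧
      ({j | w j < w i} : Finset ι) = D := by
  obtain ⟨t₁, t₂, ht, hL, hR⟩ :=
    exists_real_lt_lt_of_forall_lt (Q := Dᶜ) (insert_nonempty i D) fun j hj k hk =>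
      hcut j hj k (mem_compl.1 hk)
  have hRi : (t₂ : EReal) < R i := hR i (mem_compl.2 hiD)
  let lo : ι → EReal := fun j => if j ∈ D then ⊥ else if j = i then t₁ else t₂
  let hi : ι → EReal := fun j => if j ∈ D then t₁ else if j = i then t₂ else ⊤
  have hband : ∀ j, max (L j : EReal) (lo j) < min (R j) (hi j) := by
    intro j
    simp only [max_lt_iff, lt_min_iff, lo, hi]
    by_cases hjD : j ∈ D
    · simp only [hjD, if_true, EReal.coe_lt_coe_iff, EReal.bot_lt_coe, and_true]
      exact ⟨⟨hLR j, (EReal.bot_lt_coe _).trans (hLR j)⟩, hL j (mem_insert_of_mem hjD)⟩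
    by_cases hji : j = i
    · subst hji
      simp only [hjD, if_true, if_false, EReal.coe_lt_coe_iff]
      exact ⟨⟨hLR j, (EReal.coe_lt_coe_iff.2 ht).trans hRi⟩,
        (hL j (mem_insert_self j D)).trans ht, ht⟩
    · simpa [hjD, hji, hLR j] using hR j (mem_compl.2 hjD)
  obtain ⟨w, hw, hwT⟩ :=
    exists_injective_forall_mem fun j => EReal.infinite_setOf_lt_coe_lt (hband j)
  simp only [Set.mem_ofPred_eq, max_lt_iff, lt_min_iff] at hwT
  have hbelow : ∀ j ∈ D, w j < t₁ := fun j hj => by simpa [hi, hj] using (hwT j).2.2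
  have hwi : t₁ < w i ∧ w i < t₂ := by
    simpa [lo, hi, hiD] using And.intro (hwT i).1.2 (hwT i).2.2
  have habove : ∀ j ∉ D, j ≠ i → t₂ < w j := fun j hjD hji => by
    simpa [lo, hjD, hji] using (hwT j).1.2
  refine ⟨w, hw, fun j => mod_cast (hwT j).1.1, fun j => (hwT j).2.1.le, ?_⟩
  ext j
  rw [mem_filter_univ]
  by_cases hjD : j ∈ D
  · exact iff_of_true ((hbelow j hjD).trans hwi.1) hjD
  by_cases hji : j = i
  · exact iff_of_false (hji ▸ lt_irrefl _) hjD
  · exact iff_of_false (hwi.2.trans (habove j hjD hji)).asymm hjD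

lemma exists_finset_card_eq_forall_lt [DecidableEq ι] (hLR : ∀ j, (L j : EReal) < R j) (i : ι)
    {m : ℕ} (hA : #{j | R j ≤ L i} ≤ m) (hG : m < #{j | (L j : EReal) < R i}) :
    ∃ D : Finset ι, i ∉ D ∧ #D = m ∧ ∀ j ∈ insert i D, ∀ k ∉ D, (L j : EReal) < R k := by
  set A : Finset ι := {j | R j ≤ L i}
  set G : Finset ι := {j | (L j : EReal) < R i}
  have hiA : i ∉ A := by simpa [A] using hLR i
  have hAG : insert i A ⊆ G := insert_subset (by simpa [G] using hLR i) fun j hj => by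
    simp only [A, G, mem_filter_univ] at hj ⊢
    exact ((hLR j).trans_le hj).trans (hLR i)
  obtain ⟨S, hSB, hS, hmin⟩ :=
    exists_subset_card_eq_forall_le (G \ insert i A) L (m := m - #A)
      (by rw [card_sdiff_of_subset hAG, card_insert_of_notMem hiA]; omega)
  have hSA : Disjoint A S :=
    disjoint_of_subset_right hSB (disjoint_sdiff.mono_left (subset_insert i A))
  refine ⟨A ∪ S, ?_, by rw [card_union_of_disjoint hSA, hS]; omega, ?_⟩
  · simpa [hiA] using fun h => (mem_sdiff.1 (hSB h)).2 (mem_insert_self i A)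
  intro j hj k hk
  rw [mem_union, not_or] at hk
  have hLiRk : (L i : EReal) < R k := by simpa [A] using hk.1
  rcases mem_insert.1 hj with rfl | hj
  · exact hLiRk
  rcases mem_union.1 hj with hjA | hjS
  · exact ((hLR j).trans_le (by simpa [A] using hjA)).trans hLiRk
  have hjG : (L j : EReal) < R i := by simpa [G] using (mem_sdiff.1 (hSB hjS)).1
  by_cases hki : k = i
  · exact hki ▸ hjG
  by_cases hkG : k ∈ G
  · have hkB : k ∈ (G \ insert i A) \ S := by simp [hkG, hki, hk.1, hk.2]
    exact (EReal.coe_le_coe_iff.2 (hmin j hjS k hkB)).trans_lt (hLR k)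
  · exact (hjG.trans_le (by simpa [G] using hkG)).trans (hLR k)

end Ranks

theorem interval_censored_ranks_general
    (n : ℕ) (L : Fin n → ℝ) (R : Fin n → EReal)
    (hLR : ∀ j : Fin n, (L j : EReal) < R j) (i : Fin n) :
    ∀ r : ℕ,
      (∃ σ : Equiv.Perm (Fin n),
        (∃ w : Fin n → ℝ, Function.Injective w ∧
          (∀ j : Fin n, L j < w j) ∧
          (∀ j : Fin n, (w j : EReal) ≤ R j) ∧
          (∀ k : Fin n, (σ k : ℕ) = Nat.card {j : Fin n // w j < w k})) ∧
        r = (σ i : ℕ) + 1) ↔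
      (Nat.card {j : Fin n // R j ≤ (L i : EReal)} + 1 ≤ r ∧
       r ≤ Nat.card {j : Fin n // (L j : EReal) < R i}) := by
  intro r
  simp only [Nat.card_eq_fintype_card, Fintype.card_subtype]
  constructor
  · rintro ⟨σ, ⟨w, -, hwL, hwR, hσ⟩, rfl⟩
    rw [hσ i]
    exact ⟨Nat.succ_le_succ (card_filter_le_le_card_filter_lt hwL hwR i),
      card_filter_lt_lt_card_filter_lt hwL hwR i⟩
  · rintro ⟨hA, hG⟩
    obtain ⟨D, hiD, hD, hcut⟩ :=
      exists_finset_card_eq_forall_lt hLR i (m := r - 1) (by omega) (by omega)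
    obtain ⟨w, hw, hwL, hwR, hwD⟩ := exists_injective_filter_lt_eq hLR hiD hcut
    obtain ⟨σ, hσ⟩ := Fin.exists_perm_val_eq_card_filter_lt hw
    exact ⟨σ, ⟨w, hw, hwL, hwR, hσ⟩, by rw [hσ, hwD, hD]; omega⟩

/-- Proposition 2, unified interval-censored form: given censoring intervals
`(L i, R i]` with `L i < R i ≤ +∞`, the set of achievable ranks of observation
`i`, over all injective choices of true values `w j ∈ (L j, R j]`, is the
integer interval from `#{j : R j ≤ L i} + 1` to `#{j : L j < R i}`. -/
theorem interval_censored_ranks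
    (n : ℕ) (hn : 1 ≤ n) (L : Fin n → ℝ) (R : Fin n → EReal)
    (hLR : ∀ j : Fin n, (L j : EReal) < R j) (i : Fin n) :
    ∀ r : ℕ,
      (∃ σ : Equiv.Perm (Fin n),
        (∃ w : Fin n → ℝ, Function.Injective w ∧
          (∀ j : Fin n, L j < w j) ∧
          (∀ j : Fin n, (w j : EReal) ≤ R j) ∧
          (∀ k : Fin n, (σ k : ℕ) = Nat.card {j : Fin n // w j < w k})) ∧
        r = (σ i : ℕ) + 1) ↔
      (Nat.card {j : Fin n // R j ≤ (L i : EReal)} + 1 ≤ r ∧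
       r ≤ Nat.card {j : Fin n // (L j : EReal) < R i}) :=
  interval_censored_ranks_general n L R hLR i
end
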